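/- arXiv:2305.04866 — 2 statements merged into one kernel-verified Lean document; each statement's English description precedes it below -/
import Mathlib

section
/- (Causal policy gradient with per-reward-channel state baselines is unbiased.) Let S be a finite nonempty type with state distribution μ; for each i ∈ Fin n let A i be a finite nonempty type and π_i : ℝ → S → A i → ℝ a per-dimension parameterized policy (π_i θ s a > 0, ∑_{a ∈ A i} π_i θ s a = 1, θ ↦ π_i θ s a differentiable); let π θ s a = ∏_i π_i θ s (a i). Let r : Fin m → S → (Π i, A i) → ℝ be reward terms, B : Fin n → Fin m → Bool a correct causal matrix (B i j = false implies r j does not depend on action dimension i), and V : Fin m → S → ℝ arbitrary per-channel state-dependent baselines. Then for every θ: ∑_s μ s · ∑_a π θ s a · ∑_{i ∈ Fin n} ((d/dθ) log (π_i θ s (a i))) · (∑_{j : B i j = true} (r j s a − V j s)) = (d/dθ) (∑_s μ s · ∑_a π θ s a · ∑_{j ∈ Fin m} r j s a). -/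
/-!
Writing `π = ∏ₖ πₖ`, the log-derivative trick turns
`π · ∂ log πᵢ` into `∂πᵢ · ∏_{k ≠ i} πₖ`, so the estimator is the product-rule expansion of
`∂π` paired with per-dimension returns. Since `∑_b πᵢ(b) = 1`, the scores `∂πᵢ` sum to zero
over the actions of dimension `i`; hence any summand that does not depend on the action in
dimension `i` contributes nothing. The baselines `V j`, and every channel `r j` that dimension `i`
cannot influence, are such summands, so dropping or adding them leaves the gradient unchanged.
-/

open Finset

section DependsOn

variable {ι : Type*} {α : ι → Type*} {s : Set ι}

theorem DependsOn.mul {M : Type*} [Mul M] {f g : (∀ i, α i) → M}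
    (hf : DependsOn f s) (hg : DependsOn g s) : DependsOn (fun x ↦ f x * g x) s :=
  fun _ _ h ↦ by simp only [hf h, hg h]

theorem dependsOn_prod_erase [Fintype ι] [DecidableEq ι] {M : Type*} [CommMonoid M]
    (p : ∀ k, α k → M) (i : ι) : DependsOn (fun a ↦ ∏ k ∈ univ.erase i, p k (a k)) {i}ᶜ :=
  fun _ _ h ↦ prod_congr rfl fun k hk ↦ by rw [h k (ne_of_mem_erase hk)]

theorem dependsOn_sum_filter_sub_sub_sum {κ G : Type*} [Fintype κ] [AddCommGroup G]
    (P : κ → Prop) [DecidablePred P] {r : κ → (∀ i, α i) → G}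
    (hr : ∀ j, ¬ P j → DependsOn (r j) s) (V : κ → G) :
    DependsOn (fun a ↦ ∑ j ∈ univ.filter P, (r j a - V j) - ∑ j, r j a) s := by
  intro x y h
  dsimp only
  have hunaffected : ∑ j ∈ univ.filter (¬ P ·), r j x = ∑ j ∈ univ.filter (¬ P ·), r j y :=
    sum_congr rfl fun j hj ↦ hr j (mem_filter.1 hj).2 h
  rw [← sum_filter_add_sum_filter_not univ P (r · x),
    ← sum_filter_add_sum_filter_not univ P (r · y), hunaffected]
  simp only [sum_sub_distrib]
  abel

end DependsOn

section Pi

variable {ι : Type*} [Fintype ι] [DecidableEq ι] {A : ι → Type*} [∀ i, Fintype (A i)]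

theorem sum_apply_mul_eq_zero_of_dependsOn_compl {R : Type*} [NonUnitalNonAssocSemiring R]
    {i : ι} {q : A i → R} (hq : ∑ b, q b = 0) {G : (∀ k, A k) → R}
    (hG : DependsOn G {i}ᶜ) : ∑ a, q (a i) * G a = 0 := by
  obtain hA | ⟨⟨b₀⟩⟩ := isEmpty_or_nonempty (A i)
  · have : IsEmpty (∀ k, A k) := isEmpty_pi.2 ⟨i, hA⟩
    simp
  set e := Equiv.piSplitAt i A
  rw [← e.symm.sum_comp, Fintype.sum_prod_type, sum_comm]
  refine sum_eq_zero fun c _ ↦ ?_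
  have hconst : ∀ b, G (e.symm (b, c)) = G (e.symm (b₀, c)) := fun b ↦
    hG fun k hk ↦ by simp [e, Equiv.piSplitAt_symm_apply, Set.mem_compl_singleton_iff.1 hk]
  have hi : ∀ b, e.symm (b, c) i = b := fun b ↦ by simp [e, Equiv.piSplitAt_symm_apply]
  simp only [hconst, hi, ← sum_mul, hq, zero_mul]

theorem sum_prod_mul_sum_div_mul_eq_of_dependsOn_sub {K : Type*} [Field K]
    {p d : ∀ k, A k → K} (hp : ∀ k b, p k b ≠ 0) (hd : ∀ k, ∑ b, d k b = 0)
    {F : ι → (∀ k, A k) → K} {R : (∀ k, A k) → K}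
    (hF : ∀ i, DependsOn (fun a ↦ F i a - R a) {i}ᶜ) :
    ∑ a, (∏ k, p k (a k)) * ∑ i, d i (a i) / p i (a i) * F i a
      = ∑ a, (∑ i, (∏ k ∈ univ.erase i, p k (a k)) * d i (a i)) * R a := by
  have hlogDeriv : ∀ a i, (∏ k, p k (a k)) * (d i (a i) / p i (a i) * F i a)
      = d i (a i) * ((∏ k ∈ univ.erase i, p k (a k)) * F i a) := fun a i ↦ by
    rw [← mul_prod_erase univ (fun k ↦ p k (a k)) (mem_univ i)]
    field_simp [hp i (a i)]
  calc _ = ∑ i, ∑ a, d i (a i) * ((∏ k ∈ univ.erase i, p k (a k)) * F i a) := by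
        simp only [mul_sum, hlogDeriv]
        exact sum_comm
    _ = ∑ i, ∑ a, d i (a i) * ((∏ k ∈ univ.erase i, p k (a k)) * R a) :=
        sum_congr rfl fun i _ ↦ by
          rw [← sub_eq_zero, ← sum_sub_distrib]
          simp only [← mul_sub]
          exact sum_apply_mul_eq_zero_of_dependsOn_compl (hd i)
            ((dependsOn_prod_erase p i).mul (hF i))
    _ = _ := by
        simp only [sum_mul]
        rw [sum_comm]
        exact sum_congr rfl fun a _ ↦ sum_congr rfl fun i _ ↦ by ring

end Pi

theorem sum_deriv_eq_zero_of_sum_const {𝕜 ι : Type*} [NontriviallyNormedField 𝕜] [Fintype ι]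
    {f : ι → 𝕜 → 𝕜} {x c : 𝕜} (hf : ∀ b, DifferentiableAt 𝕜 (f b) x)
    (hsum : ∀ y, ∑ b, f b y = c) : ∑ b, deriv (f b) x = 0 := by
  rw [← deriv_fun_sum fun b _ ↦ hf b]
  simp [hsum]

theorem causal_policy_gradient_baseline_unbiased_general {n m : ℕ} {S : Type*}
    [Fintype S]
    {A : Fin n → Type*} [∀ i, Fintype (A i)]
    (μ : S → ℝ)
    (πi : (i : Fin n) → ℝ → S → A i → ℝ)
    (hpos : ∀ i θ s a, 0 < πi i θ s a)
    (hsum : ∀ i θ s, ∑ a, πi i θ s a = 1)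
    (hdiff : ∀ i s a, Differentiable ℝ (fun θ => πi i θ s a))
    (r : Fin m → S → (∀ k, A k) → ℝ)
    (B : Fin n → Fin m → Bool)
    (hB : ∀ i j, B i j = false →
      ∀ s (a a' : ∀ k, A k), (∀ k, k ≠ i → a k = a' k) → r j s a = r j s a')
    (V : Fin m → S → ℝ) :
    ∀ θ : ℝ,
      ∑ s, μ s * ∑ a : ∀ k, A k, (∏ k, πi k θ s (a k)) *
          ∑ i, deriv (fun θ' => Real.log (πi i θ' s (a i))) θ *
            (∑ j ∈ Finset.univ.filter (fun j => B i j = true), (r j s a - V j s))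
        = deriv (fun θ' =>
            ∑ s, μ s * ∑ a : ∀ k, A k, (∏ k, πi k θ' s (a k)) * ∑ j, r j s a) θ := by
  intro θ
  set d : (i : Fin n) → S → A i → ℝ := fun i s b ↦ deriv (fun θ' ↦ πi i θ' s b) θ
  have hder : ∀ i s b, HasDerivAt (fun θ' ↦ πi i θ' s b) (d i s b) θ :=
    fun i s b ↦ (hdiff i s b θ).hasDerivAt
  have hlog : ∀ i s b, deriv (fun θ' ↦ Real.log (πi i θ' s b)) θ = d i s b / πi i θ s b :=
    fun i s b ↦ deriv.log (hdiff i s b θ) (hpos i θ s b).ne'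
  have hexpected : HasDerivAt
      (fun θ' ↦ ∑ s, μ s * ∑ a : ∀ k, A k, (∏ k, πi k θ' s (a k)) * ∑ j, r j s a)
      (∑ s, μ s * ∑ a : ∀ k, A k,
        (∑ i, (∏ k ∈ univ.erase i, πi k θ s (a k)) * d i s (a i)) * ∑ j, r j s a) θ := by
    refine HasDerivAt.fun_sum fun s _ ↦ (HasDerivAt.fun_sum fun a _ ↦ ?_).const_mul (μ s)
    simpa only [smul_eq_mul] using
      (HasDerivAt.fun_finsetProd fun k _ ↦ hder k s (a k)).mul_const (∑ j, r j s a)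
  rw [hexpected.deriv]
  refine sum_congr rfl fun s _ ↦ congrArg (μ s * ·) ?_
  simp only [hlog]
  refine sum_prod_mul_sum_div_mul_eq_of_dependsOn_sub (fun k b ↦ (hpos k θ s b).ne')
    (fun k ↦ sum_deriv_eq_zero_of_sum_const (fun b ↦ hdiff k s b θ) (hsum k · s)) fun i ↦ ?_
  exact dependsOn_sum_filter_sub_sub_sum _
    (fun j hj a a' h ↦ hB i j (by simpa using hj) s a a' h) (V · s)

/-- Causal policy gradient with per-reward-channel state-dependent baselines
is an unbiased estimator of the true policy gradient. -/
theorem causal_policy_gradient_baseline_unbiased {n m : ℕ} {S : Type*}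
    [Fintype S] [Nonempty S]
    {A : Fin n → Type*} [∀ i, Fintype (A i)] [∀ i, Nonempty (A i)]
    (μ : S → ℝ)
    (hμ : ∀ s, 0 ≤ μ s)
    (hμsum : ∑ s, μ s = 1)
    (πi : (i : Fin n) → ℝ → S → A i → ℝ)
    (hpos : ∀ i θ s a, 0 < πi i θ s a)
    (hsum : ∀ i θ s, ∑ a, πi i θ s a = 1)
    (hdiff : ∀ i s a, Differentiable ℝ (fun θ => πi i θ s a))
    (r : Fin m → S → (∀ k, A k) → ℝ)
    (B : Fin n → Fin m → Bool)
    (hB : ∀ i j, B i j = false →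
      ∀ s (a a' : ∀ k, A k), (∀ k, k ≠ i → a k = a' k) → r j s a = r j s a')
    (V : Fin m → S → ℝ) :
    ∀ θ : ℝ,
      ∑ s, μ s * ∑ a : ∀ k, A k, (∏ k, πi k θ s (a k)) *
          ∑ i, deriv (fun θ' => Real.log (πi i θ' s (a i))) θ *
            (∑ j ∈ Finset.univ.filter (fun j => B i j = true), (r j s a - V j s))
        = deriv (fun θ' =>
            ∑ s, μ s * ∑ a : ∀ k, A k, (∏ k, πi k θ' s (a k)) * ∑ j, r j s a) θ :=
  causal_policy_gradient_baseline_unbiased_general μ πi hpos hsum hdiff r B hB V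
end

section
/- (Over-specified causal matrices preserve unbiasedness.) In the setting of the discrete one-step causal policy gradient — finite state type S with distribution μ, per-dimension parameterized policies π_i with product policy π, reward terms r : Fin m → S → (Π i, A i) → ℝ — suppose B : Fin n → Fin m → Bool is a correct causal matrix (B i j = false implies r j does not depend on action dimension i) and B' : Fin n → Fin m → Bool satisfies B i j = true → B' i j = true (B' has no false negatives relative to B). Then the causal policy gradient estimator built from B' is also unbiased: for every θ, ∑_s μ s · ∑_a π θ s a · ∑_{i} ((d/dθ) log (π_i θ s (a i))) · (∑_{j : B' i j = true} r j s a) = (d/dθ) (∑_s μ s · ∑_a π θ s a · ∑_{j} r j s a). -/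
/-!
Fix a state. By the product rule, the derivative of the product policy `∏ₖ πₖ(aₖ)` has one term per
action dimension `i`, namely `∂πᵢ(aᵢ) · ∏_{k ≠ i} πₖ(aₖ)`, and this is also what the score term
`π(a) · ∂ log πᵢ(aᵢ)` equals. So for each `i` the two sides differ by
`∑ₐ ∂πᵢ(aᵢ) · ∏_{k ≠ i} πₖ(aₖ) · ∑_{j : B' i j = false} rⱼ(a)`. For those `j` also `B i j = false`,
so the factor after `∂πᵢ(aᵢ)` does not depend on `aᵢ`; summing over `aᵢ` first leaves
`∑_{aᵢ} ∂πᵢ(aᵢ) = ∂ 1 = 0`.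
-/

open Finset

theorem sum_deriv_eq_zero_of_sum_eq_const {𝕜 α : Type*} [NontriviallyNormedField 𝕜] [Fintype α]
    {p : 𝕜 → α → 𝕜} {θ C : 𝕜} (hp : ∀ x, DifferentiableAt 𝕜 (p · x) θ)
    (hC : ∀ θ, ∑ x, p θ x = C) : ∑ x, deriv (p · x) θ = 0 := by
  rw [← deriv_fun_sum fun x _ => hp x]
  simp only [hC, deriv_const]

theorem dependsOn_sum_sub_sum_filter {ι J R : Type*} {A : ι → Type*} [Fintype J] [AddCommGroup R]
    {r : J → (∀ k, A k) → R} {P : J → Prop} [DecidablePred P] {s : Set ι}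
    (hr : ∀ j, ¬P j → DependsOn (r j) s) :
    DependsOn (fun a => ∑ j, r j a - ∑ j ∈ univ.filter P, r j a) s := by
  intro a a' h
  simp only [← sum_filter_add_sum_filter_not univ P, add_sub_cancel_left]
  exact sum_congr rfl fun j hj => hr j (mem_filter.mp hj).2 h

section ProductPolicy

variable {ι : Type*} [Fintype ι] [DecidableEq ι] {A : ι → Type*}

theorem sum_apply_mul_eq_zero_of_dependsOn [∀ i, Fintype (A i)] {R : Type*}
    [NonUnitalNonAssocSemiring R] (i : ι) {c : A i → R} (hc : ∑ x, c x = 0)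
    {g : (∀ k, A k) → R} (hg : DependsOn g {i}ᶜ) :
    ∑ a, c (a i) * g a = 0 := by
  rw [← (Equiv.piSplitAt i A).symm.sum_comp, Fintype.sum_prod_type, sum_comm]
  refine sum_eq_zero fun y _ => ?_
  rcases isEmpty_or_nonempty (A i) with _ | ⟨⟨x₀⟩⟩
  · simp
  · calc ∑ x, c ((Equiv.piSplitAt i A).symm (x, y) i) * g ((Equiv.piSplitAt i A).symm (x, y))
        = ∑ x, c x * g ((Equiv.piSplitAt i A).symm (x₀, y)) := by
          refine sum_congr rfl fun x _ => ?_
          congr 1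
          · simp
          · exact hg fun k hk => by simp [Set.mem_compl_singleton_iff.mp hk]
      _ = 0 := by rw [← sum_mul, hc, zero_mul]

theorem prod_mul_deriv_log_eq {p : (i : ι) → ℝ → A i → ℝ} {θ : ℝ} (a : ∀ k, A k) (i : ι)
    (hpos : p i θ (a i) ≠ 0) (hdiff : DifferentiableAt ℝ (p i · (a i)) θ) :
    (∏ k, p k θ (a k)) * deriv (fun θ' => Real.log (p i θ' (a i))) θ
      = (∏ k ∈ univ.erase i, p k θ (a k)) * deriv (p i · (a i)) θ := by
  rw [(hdiff.hasDerivAt.log hpos).deriv, ← mul_prod_erase univ _ (mem_univ i)]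
  field_simp

theorem hasDerivAt_sum_prod_mul_of_dependsOn [∀ i, Fintype (A i)]
    {p : (i : ι) → ℝ → A i → ℝ} {θ : ℝ}
    (hpos : ∀ i x, p i θ x ≠ 0) (hsum : ∀ i θ, ∑ x, p i θ x = 1)
    (hdiff : ∀ i x, DifferentiableAt ℝ (p i · x) θ)
    {F : (∀ k, A k) → ℝ} {f : ι → (∀ k, A k) → ℝ}
    (hf : ∀ i, DependsOn (fun a => F a - f i a) {i}ᶜ) :
    HasDerivAt (fun θ => ∑ a, (∏ k, p k θ (a k)) * F a)
      (∑ a, (∏ k, p k θ (a k)) * ∑ i, deriv (fun θ' => Real.log (p i θ' (a i))) θ * f i a) θ := by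
  set Q : ι → (∀ k, A k) → ℝ := fun i a => ∏ k ∈ univ.erase i, p k θ (a k)
  set d : (i : ι) → A i → ℝ := fun i x => deriv (p i · x) θ
  have hprod (a : ∀ k, A k) :
      HasDerivAt (fun θ => ∏ k, p k θ (a k)) (∑ i, Q i a * d i (a i)) θ := by
    simpa [smul_eq_mul, mul_comm] using
      HasDerivAt.fun_finsetProd (u := univ) fun k _ => (hdiff k (a k)).hasDerivAt
  have hQ (i : ι) : DependsOn (Q i) {i}ᶜ := fun a a' h =>
    prod_congr rfl fun k hk => by rw [h k (Set.mem_compl_singleton_iff.mpr (ne_of_mem_erase hk))]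
  have hbaseline (i : ι) : ∑ a, Q i a * d i (a i) * F a = ∑ a, Q i a * d i (a i) * f i a := by
    have hzero : ∑ a, d i (a i) * (Q i a * (F a - f i a)) = 0 :=
      sum_apply_mul_eq_zero_of_dependsOn i (sum_deriv_eq_zero_of_sum_eq_const (hdiff i) (hsum i))
        fun a a' h => congrArg₂ (· * ·) (hQ i h) (hf i h)
    rw [← sub_eq_zero, ← sum_sub_distrib, ← hzero]
    exact sum_congr rfl fun a _ => by ring
  refine (HasDerivAt.fun_sum fun a _ => (hprod a).mul_const (F a)).congr_deriv (Eq.symm ?_)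
  calc ∑ a, (∏ k, p k θ (a k)) * ∑ i, deriv (fun θ' => Real.log (p i θ' (a i))) θ * f i a
      = ∑ i, ∑ a, Q i a * d i (a i) * f i a := by
        rw [sum_comm]
        refine sum_congr rfl fun a _ => ?_
        rw [mul_sum]
        refine sum_congr rfl fun i _ => ?_
        rw [← mul_assoc, prod_mul_deriv_log_eq a i (hpos i (a i)) (hdiff i (a i))]
    _ = ∑ a, (∑ i, Q i a * d i (a i)) * F a := by
        simp only [← hbaseline, sum_mul]
        exact sum_comm

end ProductPolicy

theorem overspecified_causal_matrix_unbiased_general {n m : ℕ} {S : Type*}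
    [Fintype S]
    {A : Fin n → Type*} [∀ i, Fintype (A i)]
    (μ : S → ℝ)
    (πi : (i : Fin n) → ℝ → S → A i → ℝ)
    (hpos : ∀ i θ s a, 0 < πi i θ s a)
    (hsum : ∀ i θ s, ∑ a, πi i θ s a = 1)
    (hdiff : ∀ i s a, Differentiable ℝ (fun θ => πi i θ s a))
    (r : Fin m → S → (∀ k, A k) → ℝ)
    (B B' : Fin n → Fin m → Bool)
    (hB : ∀ i j, B i j = false →
      ∀ s (a a' : ∀ k, A k), (∀ k, k ≠ i → a k = a' k) → r j s a = r j s a')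
    (hB' : ∀ i j, B i j = true → B' i j = true) :
    ∀ θ : ℝ,
      ∑ s, μ s * ∑ a : ∀ k, A k, (∏ k, πi k θ s (a k)) *
          ∑ i, deriv (fun θ' => Real.log (πi i θ' s (a i))) θ *
            (∑ j ∈ Finset.univ.filter (fun j => B' i j = true), r j s a)
        = deriv (fun θ' =>
            ∑ s, μ s * ∑ a : ∀ k, A k, (∏ k, πi k θ' s (a k)) * ∑ j, r j s a) θ := by
  intro θ
  have hmasked (s : S) (i : Fin n) :
      DependsOn (fun a => ∑ j, r j s a - ∑ j ∈ univ.filter (fun j => B' i j = true), r j s a)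
        {i}ᶜ :=
    dependsOn_sum_sub_sum_filter fun j hj a a' h =>
      hB i j (by simpa using mt (hB' i j) hj) s a a' fun k hk => h k hk
  refine (HasDerivAt.fun_sum fun s _ => HasDerivAt.const_mul (μ s) ?_).deriv.symm
  exact hasDerivAt_sum_prod_mul_of_dependsOn (fun i x => (hpos i θ s x).ne')
    (fun i θ => hsum i θ s) (fun i x => hdiff i s x θ) (hmasked s)

/-- Over-specified causal matrices (no false negatives relative to a correct
causal matrix) preserve unbiasedness of the causal policy gradient. -/
theorem overspecified_causal_matrix_unbiased {n m : ℕ} {S : Type*}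
    [Fintype S] [Nonempty S]
    {A : Fin n → Type*} [∀ i, Fintype (A i)] [∀ i, Nonempty (A i)]
    (μ : S → ℝ)
    (hμ : ∀ s, 0 ≤ μ s)
    (hμsum : ∑ s, μ s = 1)
    (πi : (i : Fin n) → ℝ → S → A i → ℝ)
    (hpos : ∀ i θ s a, 0 < πi i θ s a)
    (hsum : ∀ i θ s, ∑ a, πi i θ s a = 1)
    (hdiff : ∀ i s a, Differentiable ℝ (fun θ => πi i θ s a))
    (r : Fin m → S → (∀ k, A k) → ℝ)
    (B B' : Fin n → Fin m → Bool)
    (hB : ∀ i j, B i j = false →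
      ∀ s (a a' : ∀ k, A k), (∀ k, k ≠ i → a k = a' k) → r j s a = r j s a')
    (hB' : ∀ i j, B i j = true → B' i j = true) :
    ∀ θ : ℝ,
      ∑ s, μ s * ∑ a : ∀ k, A k, (∏ k, πi k θ s (a k)) *
          ∑ i, deriv (fun θ' => Real.log (πi i θ' s (a i))) θ *
            (∑ j ∈ Finset.univ.filter (fun j => B' i j = true), r j s a)
        = deriv (fun θ' =>
            ∑ s, μ s * ∑ a : ∀ k, A k, (∏ k, πi k θ' s (a k)) * ∑ j, r j s a) θ :=
  overspecified_causal_matrix_unbiased_general μ πi hpos hsum hdiff r B B' hB hB'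
end
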